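/- For every integer r ≥ 0, the following identity holds in the polynomial ring ℤ[t]: (1 + t)^r · Σ_{k=0}^{2r} (−1)^k a_k t^k = Σ_{k=0}^{r} R_k · C(r, k) · (1 + t³)^{r−k} · (t + t²)^k, where a_{2k} = C(r, k)², a_{2k+1} = C(r, k)·C(r, k+1), and R_k = Σ_{i=0}^{k} (−1)^{k−i} C(k, i) c_i is the k-th Riordan number (c_i being the i-th Catalan number). -/

import Mathlib

/-!
Since `1 + t³ = (1 + t)(1 - t + t²)` and `t + t² = (1 + t) t`, it suffices to show that
`Σ (-1)^k a_k t^k = Σ R_k C(r,k) (1 - t + t²)^(r-k) t^k`. Both sides are the sum of the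
coefficients of `y^r` and `y^(r+1)` in `G = ((1 - t y)(y - t))^r`. Expanding the two factors
binomially gives the `a_k`. Writing instead `(1 - t y)(y - t) = -t (y² - y + 1) + (1 - t + t²) y`
and expanding gives the right-hand side, because the coefficients of `y^k` and `y^(k+1)` in
`(y² - y + 1)^k = ((y - 1)² + y)^k` add up to `Σ (-1)^i C(k,i) c_i = (-1)^k R_k`, using
`c_i = C(2i,i) - C(2i,i+1)`.
-/

open Polynomial Finset

theorem catalan_eq_choose_sub_choose (n : ℕ) :
    (catalan n : ℤ) = (2 * n).choose n - (2 * n).choose (n + 1) := by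
  have hcat : ((n + 1 : ℕ) : ℤ) * catalan n = (2 * n).choose n := by
    rw [← Nat.centralBinom_eq_two_mul_choose, ← succ_mul_catalan_eq_centralBinom]; push_cast; rfl
  have hsucc : ((2 * n).choose (n + 1) : ℤ) * (n + 1) = (2 * n).choose n * n := by
    have := Nat.choose_succ_right_eq (2 * n) n
    rw [show 2 * n - n = n by omega] at this
    exact_mod_cast this
  refine mul_left_cancel₀ (b := (catalan n : ℤ)) (by positivity : ((n + 1 : ℕ) : ℤ) ≠ 0) ?_
  push_cast at hcat ⊢
  linear_combination hcat + hsucc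

theorem sum_range_two_mul {M : Type*} [AddCommMonoid M] (f : ℕ → M) (n : ℕ) :
    ∑ k ∈ range (2 * n), f k = ∑ m ∈ range n, (f (2 * m) + f (2 * m + 1)) := by
  induction n with
  | zero => simp
  | succ n ih => rw [mul_add_one, sum_range_succ, sum_range_succ, ih, sum_range_succ, add_assoc]

def riordan (k : ℕ) : ℤ :=
  ∑ i ∈ range (k + 1), (-1) ^ (k - i) * (k.choose i : ℤ) * catalan i

theorem neg_one_pow_mul_riordan (k : ℕ) :
    (-1) ^ k * riordan k = ∑ i ∈ range (k + 1), (-1) ^ i * (k.choose i : ℤ) * catalan i := by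
  rw [riordan, mul_sum]
  refine sum_congr rfl fun i hi => ?_
  rw [← mul_assoc, ← mul_assoc, ← pow_add,
    show k + (k - i) = i + 2 * (k - i) by grind, pow_add, pow_mul, neg_one_sq, one_pow, mul_one]

section CommRing

variable {R : Type*} [CommRing R]

theorem coeff_one_add_C_mul_X_pow (a : R) (n k : ℕ) :
    ((1 + C a * X) ^ n).coeff k = a ^ k * n.choose k := by
  rw [add_comm, add_pow, finsetSum_coeff]
  simp only [one_pow, mul_one, mul_pow, ← C_pow, ← C_eq_natCast, mul_right_comm _ _ (C _),
    ← C_mul, coeff_C_mul_X_pow]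
  rw [sum_ite_eq]
  split_ifs with h
  · rfl
  · rw [Nat.choose_eq_zero_of_lt (by simpa using h), Nat.cast_zero, mul_zero]

theorem coeff_mul_X_pow_sub_add_coeff_succ (p : R[X]) {i k : ℕ} (h : i ≤ k) :
    (p * X ^ (k - i)).coeff k + (p * X ^ (k - i)).coeff (k + 1) = p.coeff i + p.coeff (i + 1) := by
  obtain ⟨j, rfl⟩ := Nat.exists_eq_add_of_le h
  rw [Nat.add_sub_cancel_left, coeff_mul_X_pow, add_right_comm, coeff_mul_X_pow]

theorem coeff_X_sub_one_pow_two_mul_add_coeff_succ (i : ℕ) :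
    ((X - 1 : R[X]) ^ (2 * i)).coeff i + ((X - 1 : R[X]) ^ (2 * i)).coeff (i + 1)
      = (-1) ^ i * catalan i := by
  rw [← C_1, sub_eq_add_neg, ← C_neg, coeff_X_add_C_pow, coeff_X_add_C_pow,
    ← Int.cast_natCast (catalan i), catalan_eq_choose_sub_choose]
  rcases i with _ | j
  · simp
  · rw [show 2 * (j + 1) - (j + 1) = j + 1 by omega, show 2 * (j + 1) - (j + 1 + 1) = j by omega]
    push_cast
    ring

theorem coeff_X_sq_sub_X_add_one_pow_add_coeff_succ (k : ℕ) :
    ((X ^ 2 - X + 1 : R[X]) ^ k).coeff k + ((X ^ 2 - X + 1 : R[X]) ^ k).coeff (k + 1)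
      = (-1) ^ k * riordan k := by
  rw [show (X ^ 2 - X + 1 : R[X]) = (X - 1) ^ 2 + X by ring, add_pow, finsetSum_coeff,
    finsetSum_coeff, ← sum_add_distrib]
  have := congrArg (Int.cast : ℤ → R) (neg_one_pow_mul_riordan k)
  push_cast at this
  rw [this]
  refine sum_congr rfl fun i hi => ?_
  rw [← C_eq_natCast, coeff_mul_C, coeff_mul_C, ← add_mul, ← pow_mul,
    coeff_mul_X_pow_sub_add_coeff_succ _ (by grind), coeff_X_sub_one_pow_two_mul_add_coeff_succ]
  ring

theorem coeff_add_coeff_succ_pow_eq_sum_choose (x : R) (r : ℕ) :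
    (((1 - C x * X) * (X - C x)) ^ r).coeff r + (((1 - C x * X) * (X - C x)) ^ r).coeff (r + 1)
      = ∑ m ∈ range (r + 1),
          ((r.choose m : R) ^ 2 * x ^ (2 * m) - r.choose m * r.choose (m + 1) * x ^ (2 * m + 1)) := by
  have hA (i : ℕ) : ((1 - C x * X) ^ r).coeff i = (-x) ^ i * r.choose i := by
    rw [sub_eq_add_neg, ← neg_mul, ← C_neg, coeff_one_add_C_mul_X_pow]
  have hB (j : ℕ) : ((X - C x) ^ r).coeff j = (-x) ^ (r - j) * r.choose j := by
    rw [sub_eq_add_neg, ← C_neg, coeff_X_add_C_pow]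
  rw [mul_pow, coeff_mul, coeff_mul, Nat.sum_antidiagonal_eq_sum_range_succ_mk,
    Nat.sum_antidiagonal_eq_sum_range_succ_mk, sum_range_succ' _ (r + 1)]
  dsimp only
  rw [Nat.sub_zero, hB (r + 1),
    Nat.choose_succ_self, Nat.cast_zero, mul_zero, mul_zero, add_zero, ← sum_add_distrib]
  refine sum_congr rfl fun m hm => ?_
  have hmr : m ≤ r := Nat.lt_succ_iff.mp (mem_range.mp hm)
  rw [hA, hA, hB, hB, Nat.add_sub_add_right, Nat.sub_sub_self hmr, Nat.choose_symm hmr]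
  have hsq : (-x) ^ m * (-x) ^ m = x ^ (2 * m) := by
    rw [← mul_pow, neg_mul_neg, ← sq, ← pow_mul]
  linear_combination (↑(r.choose m) * ↑(r.choose m) - x * r.choose (m + 1) * r.choose m) * hsq

theorem coeff_add_coeff_succ_pow_eq_sum_riordan (x : R) (r : ℕ) :
    (((1 - C x * X) * (X - C x)) ^ r).coeff r + (((1 - C x * X) * (X - C x)) ^ r).coeff (r + 1)
      = ∑ k ∈ range (r + 1), (riordan k * r.choose k : R) * (1 - x + x ^ 2) ^ (r - k) * x ^ k := by
  have hsplit : (1 - C x * X) * (X - C x) = C (-x) * (X ^ 2 - X + 1) + C (1 - x + x ^ 2) * X := by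
    simp only [map_neg, map_add, map_sub, map_pow, map_one]
    ring
  rw [hsplit, add_pow, finsetSum_coeff, finsetSum_coeff, ← sum_add_distrib]
  refine sum_congr rfl fun k hk => ?_
  rw [mul_pow, mul_pow, ← C_pow, ← C_pow, ← C_eq_natCast, mul_mul_mul_comm, mul_right_comm,
    ← C_mul, ← C_mul, coeff_C_mul, coeff_C_mul, ← mul_add,
    coeff_mul_X_pow_sub_add_coeff_succ _ (Nat.lt_succ_iff.mp (mem_range.mp hk)),
    coeff_X_sq_sub_X_add_one_pow_add_coeff_succ, neg_pow]
  have hsign : ((-1 : R) ^ k) * (-1) ^ k = 1 := by rw [← mul_pow, neg_one_mul, neg_neg, one_pow]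
  linear_combination (x ^ k * r.choose k * riordan k * (1 - x + x ^ 2) ^ (r - k)) * hsign

theorem sum_mul_one_add_pow_three_pow_mul_eq (c : ℕ → R) (x : R) (r : ℕ) :
    ∑ k ∈ range (r + 1), c k * (1 + x ^ 3) ^ (r - k) * (x + x ^ 2) ^ k
      = (1 + x) ^ r * ∑ k ∈ range (r + 1), c k * (1 - x + x ^ 2) ^ (r - k) * x ^ k := by
  rw [mul_sum]
  refine sum_congr rfl fun k hk => ?_
  rw [show 1 + x ^ 3 = (1 + x) * (1 - x + x ^ 2) by ring, show x + x ^ 2 = (1 + x) * x by ring,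
    mul_pow, mul_pow, ← Nat.sub_add_cancel (Nat.lt_succ_iff.mp (mem_range.mp hk)), pow_add,
    Nat.add_sub_cancel]
  ring

end CommRing

/-- For every `r ≥ 0`, in `ℤ[t]`:
`(1 + t)^r · Σ_{k=0}^{2r} (−1)^k a_k t^k
  = Σ_{k=0}^{r} R_k · C(r,k) · (1 + t³)^{r−k} (t + t²)^k`,
where `a_{2k} = C(r,k)²`, `a_{2k+1} = C(r,k)·C(r,k+1)` and
`R_k = Σ_{i=0}^k (−1)^{k−i} C(k,i) c_i` is the `k`-th Riordan number. -/
theorem Pr_eq_riordan_expansion (r : ℕ)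
    (a : ℕ → ℤ)
    (hbe : ∀ k, a (2 * k) = (r.choose k : ℤ) ^ 2)
    (hbo : ∀ k, a (2 * k + 1) = (r.choose k : ℤ) * (r.choose (k + 1) : ℤ))
    (R : ℕ → ℤ)
    (hR : ∀ k, R k = ∑ i ∈ Finset.range (k + 1),
        (-1) ^ (k - i) * (k.choose i : ℤ) * (catalan i : ℤ)) :
    (1 + Polynomial.X) ^ r *
        ∑ k ∈ Finset.range (2 * r + 1), Polynomial.C ((-1) ^ k * a k) * Polynomial.X ^ k
      = ∑ k ∈ Finset.range (r + 1),
          Polynomial.C (R k * (r.choose k : ℤ)) *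
            (1 + Polynomial.X ^ 3) ^ (r - k) *
            (Polynomial.X + Polynomial.X ^ 2) ^ k := by
  obtain rfl : R = riordan := funext hR
  -- `a (2r+1) = C(r,r) C(r,r+1) = 0` lets the sum run over `range (2 (r+1))`.
  have hlast : C ((-1) ^ (2 * r + 1) * a (2 * r + 1)) * X ^ (2 * r + 1) = 0 := by
    rw [hbo, Nat.choose_succ_self, Nat.cast_zero, mul_zero, mul_zero, C_0, zero_mul]
  have hlhs : ∑ k ∈ range (2 * r + 1), C ((-1) ^ k * a k) * X ^ k
      = ∑ m ∈ range (r + 1), ((r.choose m : ℤ[X]) ^ 2 * X ^ (2 * m)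
          - (r.choose m : ℤ[X]) * (r.choose (m + 1) : ℤ[X]) * X ^ (2 * m + 1)) := by
    rw [← add_zero (∑ k ∈ range (2 * r + 1), _), ← hlast, ← sum_range_succ,
      show 2 * r + 1 + 1 = 2 * (r + 1) by ring, sum_range_two_mul]
    refine sum_congr rfl fun m _ => ?_
    rw [hbe, hbo, pow_succ (-1 : ℤ), (even_two_mul m).neg_one_pow]
    simp only [map_mul, map_neg, map_pow, map_one, map_natCast]
    ring
  rw [hlhs, ← coeff_add_coeff_succ_pow_eq_sum_choose, coeff_add_coeff_succ_pow_eq_sum_riordan,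
    sum_mul_one_add_pow_three_pow_mul_eq]
  simp only [map_mul, map_natCast, eq_intCast]
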